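/- arXiv:2406.16916 — 2 statements merged into one kernel-verified Lean document; each statement's English description precedes it below -/
import Mathlib

section
/- For the linear acene graph L_n with n ≥ 3 fused hexagonal rings (the hydrogen-depleted molecular graph of the acene C_{4n+2}H_{2n+4}), the edge hyper-Zagreb index equals 4(85n − 62). -/
open Finset SimpleGraph
open scoped Classical

/-- The edge degree of an edge `e = ab`: `d(a) + d(b) - 2`. -/
noncomputable def edgeDeg {V : Type*} [Fintype V] (G : SimpleGraph V) : Sym2 V → ℕ :=
  Sym2.lift ⟨fun a b => G.degree a + G.degree b - 2, fun a b => by simp [Nat.add_comm]⟩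

/-- The unordered pairs of distinct adjacent edges (edges sharing a common endpoint). -/
noncomputable def adjEdgePairs {V : Type*} [Fintype V] (G : SimpleGraph V) :
    Finset (Sym2 (Sym2 V)) :=
  G.edgeFinset.sym2.filter fun p => ¬ p.IsDiag ∧ ∃ v, ∀ e ∈ p, v ∈ e

/-- The edge hyper-Zagreb index: `EHM(G) = Σ_{e ~ f} (d(e) + d(f))²` over unordered pairs
of distinct adjacent edges. -/
noncomputable def EHM {V : Type*} [Fintype V] (G : SimpleGraph V) : ℕ :=
  ∑ p ∈ adjEdgePairs G,
    Sym2.lift ⟨fun e f => (edgeDeg G e + edgeDeg G f) ^ 2, fun e f => by simp [Nat.add_comm]⟩ p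

/-- The linear acene graph `L n`: `n` hexagons fused in a row, realized on two rows
`Fin 2 × Fin (2n+1)`; horizontal path edges in each row and vertical edges at even columns. -/
noncomputable def acene (n : ℕ) : SimpleGraph (Fin 2 × Fin (2 * n + 1)) :=
  SimpleGraph.fromRel fun p q =>
    (p.1 = q.1 ∧ (q.2 : ℕ) = (p.2 : ℕ) + 1) ∨ ((p.2 : ℕ) = (q.2 : ℕ) ∧ Even (p.2 : ℕ))

/-!
Two distinct edges meet in at most one vertex, so `EHM G` splits as a sum over the vertices `v`
of `(d(vu) + d(vw))²` over the unordered pairs of distinct neighbours `u, w` of `v`. In `L_n` this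
vertex contribution only depends on the column of `v`: it is `(2+2)² = 16` at the four corners,
`(2+3)² = 25` next to them, `(3+3)² = 36` at the other degree-2 vertices and
`(3+3)² + 2 (3+4)² = 134` at the fusion vertices. Hence
`EHM(L_n) = 2 (2·16 + 2·25 + 36 (n-2) + 134 (n-1)) = 4 (85n - 62)`.
-/

lemma Sym2.eq_and_eq_of_map_mk_eq {α : Type*} {v w : α} {q r : Sym2 α} (hq : ¬ q.IsDiag)
    (h : q.map (s(v, ·)) = r.map (s(w, ·))) : v = w ∧ q = r := by
  have hvw : v = w := by
    by_contra hvw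
    induction q using Sym2.ind with
    | _ a b =>
      have hw : ∀ e ∈ s(a, b).map (s(v, ·)), w ∈ e := by
        rw [h]
        simp only [Sym2.mem_map]
        rintro _ ⟨c, -, rfl⟩
        exact Sym2.mem_mk_left w c
      -- `v` and `w` both lie on the distinct edges `s(v, a)` and `s(v, b)`
      have ha := (Sym2.mem_and_mem_iff hvw).1 ⟨Sym2.mem_mk_left v a, hw _ (by simp)⟩
      have hb := (Sym2.mem_and_mem_iff hvw).1 ⟨Sym2.mem_mk_left v b, hw _ (by simp)⟩
      exact hq (Sym2.mk_isDiag_iff.2 (Sym2.congr_right.1 (ha.trans hb.symm)))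
  subst hvw
  exact ⟨rfl, Sym2.map.injective (fun _ _ => Sym2.congr_right.1) h⟩

lemma Finset.filter_not_isDiag_sym2_pair {α : Type*} [DecidableEq α] {a b : α} (hab : a ≠ b) :
    ({a, b} : Finset α).sym2.filter (¬ ·.IsDiag) = {s(a, b)} := by
  ext q
  induction q using Sym2.ind with
  | _ x y =>
    simp only [mem_filter, mk_mem_sym2_iff, mem_insert, mem_singleton, Sym2.mk_isDiag_iff,
      Sym2.eq_iff]
    aesop

lemma Finset.filter_not_isDiag_sym2_triple {α : Type*} [DecidableEq α] {a b c : α}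
    (hab : a ≠ b) (hac : a ≠ c) (hbc : b ≠ c) :
    ({a, b, c} : Finset α).sym2.filter (¬ ·.IsDiag) = {s(a, b), s(a, c), s(b, c)} := by
  ext q
  induction q using Sym2.ind with
  | _ x y =>
    simp only [mem_filter, mk_mem_sym2_iff, mem_insert, mem_singleton, Sym2.mk_isDiag_iff,
      Sym2.eq_iff]
    aesop

section VertexDecomposition

variable {V : Type*} [Fintype V] [DecidableEq V] (G : SimpleGraph V)

noncomputable def EHMAt (v : V) : ℕ :=
  ∑ q ∈ (G.neighborFinset v).sym2.filter (¬ ·.IsDiag),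
    Sym2.lift ⟨fun a b => (edgeDeg G s(v, a) + edgeDeg G s(v, b)) ^ 2,
      fun a b => by simp [Nat.add_comm]⟩ q

lemma map_mk_mem_adjEdgePairs {v : V} {q : Sym2 V}
    (hq : q ∈ (G.neighborFinset v).sym2.filter (¬ ·.IsDiag)) :
    q.map (s(v, ·)) ∈ adjEdgePairs G := by
  induction q using Sym2.ind with
  | _ a b =>
    simp only [mem_filter, mk_mem_sym2_iff, mem_neighborFinset, Sym2.mk_isDiag_iff] at hq
    obtain ⟨⟨ha, hb⟩, hab⟩ := hq
    simp only [Sym2.map_mk, adjEdgePairs, mem_filter, mk_mem_sym2_iff, mem_edgeFinset,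
      mem_edgeSet, Sym2.mk_isDiag_iff, Sym2.congr_right]
    exact ⟨⟨ha, hb⟩, hab, v, by simp⟩

theorem EHM_eq_sum_EHMAt : EHM G = ∑ v, EHMAt G v := by
  rw [eq_comm, EHM]
  simp only [EHMAt, sum_sigma']
  refine sum_nbij (fun x => x.2.map (s(x.1, ·))) (fun x hx => ?_) ?_ ?_ ?_
  · exact map_mk_mem_adjEdgePairs G (mem_sigma.1 hx).2
  · rintro ⟨v, q⟩ hq ⟨w, r⟩ - h
    obtain ⟨rfl, rfl⟩ := Sym2.eq_and_eq_of_map_mk_eq (mem_filter.1 (mem_sigma.1 hq).2).2 h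
    rfl
  · intro p hp
    simp only [adjEdgePairs, coe_filter, Set.mem_ofPred_eq] at hp
    obtain ⟨hp, hpd, v, hv⟩ := hp
    induction p using Sym2.ind with
    | _ e f =>
      obtain ⟨a, rfl⟩ := Sym2.mem_iff_exists.1 (hv e (Sym2.mem_mk_left e f))
      obtain ⟨b, rfl⟩ := Sym2.mem_iff_exists.1 (hv f (Sym2.mem_mk_right _ f))
      simp only [mk_mem_sym2_iff, mem_edgeFinset, mem_edgeSet, Sym2.mk_isDiag_iff,
        Sym2.congr_right] at hp hpd
      refine ⟨⟨v, s(a, b)⟩, ?_, by simp⟩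
      simp [hp.1, hp.2, hpd]
  · rintro ⟨v, q⟩ -
    induction q using Sym2.ind with
    | _ a b => rfl

end VertexDecomposition

section Acene

variable {n : ℕ} (i : Fin 2) (j : Fin (2 * n + 1))

lemma acene_adj {p q : Fin 2 × Fin (2 * n + 1)} :
    (acene n).Adj p q ↔ p ≠ q ∧
      ((p.1 = q.1 ∧ ((q.2 : ℕ) = p.2 + 1 ∨ (p.2 : ℕ) = q.2 + 1)) ∨
        ((p.2 : ℕ) = q.2 ∧ (p.2 : ℕ) % 2 = 0)) := by
  simp only [acene, fromRel_adj, Nat.even_iff]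
  grind

lemma acene_neighborFinset_of_eq_zero (hn : 1 ≤ n) (hj : (j : ℕ) = 0) :
    (acene n).neighborFinset (i, j) = {(i, ⟨1, by omega⟩), (i + 1, j)} := by
  ext ⟨a, b⟩
  rw [mem_neighborFinset, acene_adj]
  fin_cases i <;> fin_cases a <;> simp [Prod.ext_iff, Fin.ext_iff] <;> omega

lemma acene_neighborFinset_of_eq_last (hn : 1 ≤ n) (hj : (j : ℕ) = 2 * n) :
    (acene n).neighborFinset (i, j) = {(i, ⟨2 * n - 1, by omega⟩), (i + 1, j)} := by
  ext ⟨a, b⟩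
  rw [mem_neighborFinset, acene_adj]
  fin_cases i <;> fin_cases a <;> simp [Prod.ext_iff, Fin.ext_iff] <;> omega

lemma acene_neighborFinset_of_odd (hj : (j : ℕ) % 2 = 1) :
    (acene n).neighborFinset (i, j) =
      {(i, ⟨j - 1, by omega⟩), (i, ⟨j + 1, by omega⟩)} := by
  ext ⟨a, b⟩
  rw [mem_neighborFinset, acene_adj]
  fin_cases i <;> fin_cases a <;> simp [Prod.ext_iff, Fin.ext_iff] <;> omega

lemma acene_neighborFinset_of_even (hj : (j : ℕ) % 2 = 0) (h0 : 0 < (j : ℕ))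
    (hlast : (j : ℕ) < 2 * n) :
    (acene n).neighborFinset (i, j) =
      {(i, ⟨j - 1, by omega⟩), (i, ⟨j + 1, by omega⟩), (i + 1, j)} := by
  ext ⟨a, b⟩
  rw [mem_neighborFinset, acene_adj]
  fin_cases i <;> fin_cases a <;> simp [Prod.ext_iff, Fin.ext_iff] <;> omega

lemma acene_degree (hn : 1 ≤ n) :
    (acene n).degree (i, j) =
      if (j : ℕ) % 2 = 0 ∧ 0 < (j : ℕ) ∧ (j : ℕ) < 2 * n then 3 else 2 := by
  rw [← card_neighborFinset_eq_degree]
  obtain h0 | h0 := Nat.eq_zero_or_pos (j : ℕ)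
  · simp [acene_neighborFinset_of_eq_zero i j hn h0, Prod.ext_iff, Fin.ext_iff, h0]
  obtain hlast | hlast := (Nat.lt_succ_iff.1 j.isLt).eq_or_lt
  · simp [acene_neighborFinset_of_eq_last i j hn hlast, Prod.ext_iff, Fin.ext_iff, hlast]
  obtain hj | hj := Nat.mod_two_eq_zero_or_one (j : ℕ)
  · simp [acene_neighborFinset_of_even i j hj h0 hlast, Prod.ext_iff, Fin.ext_iff,
      card_insert_of_notMem, hj, h0, hlast]
  · simp [acene_neighborFinset_of_odd i j hj, Prod.ext_iff, Fin.ext_iff, hj]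

def aceneColumnTerm (n j : ℕ) : ℕ :=
  if j = 0 ∨ j = 2 * n then 16
  else if j % 2 = 1 then if j = 1 ∨ j = 2 * n - 1 then 25 else 36
  else 134

lemma EHMAt_acene (hn : 2 ≤ n) : EHMAt (acene n) (i, j) = aceneColumnTerm n j := by
  have hn1 : 1 ≤ n := by omega
  unfold EHMAt
  obtain h0 | h0 := Nat.eq_zero_or_pos (j : ℕ)
  · rw [acene_neighborFinset_of_eq_zero i j hn1 h0,
      filter_not_isDiag_sym2_pair (by simp [Prod.ext_iff])]
    simp only [sum_singleton, Sym2.lift_mk, edgeDeg, acene_degree _ _ hn1, aceneColumnTerm]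
    grind
  obtain hlast | hlast := (Nat.lt_succ_iff.1 j.isLt).eq_or_lt
  · rw [acene_neighborFinset_of_eq_last i j hn1 hlast,
      filter_not_isDiag_sym2_pair (by simp [Prod.ext_iff])]
    simp only [sum_singleton, Sym2.lift_mk, edgeDeg, acene_degree _ _ hn1, aceneColumnTerm]
    grind
  obtain hj | hj := Nat.mod_two_eq_zero_or_one (j : ℕ)
  · rw [acene_neighborFinset_of_even i j hj h0 hlast,
      filter_not_isDiag_sym2_triple (by simp [Prod.ext_iff, Fin.ext_iff])
        (by simp [Prod.ext_iff]) (by simp [Prod.ext_iff]),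
      sum_insert (by simp [Prod.ext_iff, Fin.ext_iff]),
      sum_pair (by simp [Prod.ext_iff, Fin.ext_iff])]
    simp only [Sym2.lift_mk, edgeDeg, acene_degree _ _ hn1, aceneColumnTerm]
    grind
  · rw [acene_neighborFinset_of_odd i j hj,
      filter_not_isDiag_sym2_pair (by simp [Prod.ext_iff, Fin.ext_iff])]
    simp only [sum_singleton, Sym2.lift_mk, edgeDeg, acene_degree _ _ hn1, aceneColumnTerm]
    grind

lemma sum_aceneColumnTerm_succ (hn : 2 ≤ n) :
    ∑ j ∈ range (2 * (n + 1) + 1), aceneColumnTerm (n + 1) j =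
      ∑ j ∈ range (2 * n + 1), aceneColumnTerm n j + 170 := by
  obtain ⟨m, rfl⟩ : ∃ m, n = m + 2 := ⟨n - 2, by omega⟩
  -- adding a ring only changes the last four columns
  have hprefix : ∑ j ∈ range (2 * m + 3), aceneColumnTerm (m + 3) j =
      ∑ j ∈ range (2 * m + 3), aceneColumnTerm (m + 2) j :=
    sum_congr rfl fun j hj => by grind [aceneColumnTerm]
  rw [show 2 * (m + 2 + 1) + 1 = 2 * m + 3 + 1 + 1 + 1 + 1 by ring,
    show 2 * (m + 2) + 1 = 2 * m + 3 + 1 + 1 by ring,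
    sum_range_succ _ (2 * m + 3 + 1 + 1 + 1), sum_range_succ _ (2 * m + 3 + 1 + 1),
    sum_range_succ _ (2 * m + 3 + 1), sum_range_succ _ (2 * m + 3), hprefix,
    sum_range_succ (aceneColumnTerm (m + 2)) (2 * m + 3 + 1),
    sum_range_succ (aceneColumnTerm (m + 2)) (2 * m + 3)]
  grind [aceneColumnTerm]

lemma sum_aceneColumnTerm (hn : 2 ≤ n) :
    ∑ j ∈ range (2 * n + 1), aceneColumnTerm n j = 170 * n - 124 := by
  induction n, hn using Nat.le_induction with
  | base => decide
  | succ n hn ih => rw [sum_aceneColumnTerm_succ hn, ih]; omega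

end Acene

/-- For the linear acene graph `L_n` with `n ≥ 3` fused hexagonal rings (the
hydrogen-depleted molecular graph of `C_{4n+2}H_{2n+4}`), the edge hyper-Zagreb index
equals `4(85n − 62)`. -/
theorem EHM_acene (n : ℕ) (hn : 3 ≤ n) : EHM (acene n) = 4 * (85 * n - 62) := by
  have hn2 : 2 ≤ n := by omega
  rw [EHM_eq_sum_EHMAt, Fintype.sum_prod_type]
  simp only [EHMAt_acene _ _ hn2, sum_const, card_univ, Fintype.card_fin, smul_eq_mul,
    Fin.sum_univ_eq_sum_range (aceneColumnTerm n), sum_aceneColumnTerm hn2]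
  omega
end

section
/- For any finite simple graphs G and H, Σ_{a∈V(G)} Σ_{bb'∈E(H)} (2 d_G(a) + d_H(b) + d_H(b') − 2)² = n_G·EM₁(H) + 8 m_G·M₁(H) + 4 m_H·M₁(G) − 16 m_G m_H, where M₁(H) = Σ_{bb'∈E(H)}(d(b)+d(b')) and EM₁(H) = Σ_{bb'∈E(H)}(d(b)+d(b')−2)². -/
open Finset SimpleGraph
open scoped Classical

/-- The reformulated first Zagreb index `EM₁(G) = Σ_{e ∈ E(G)} d(e)²`. -/
noncomputable def EM1 {V : Type*} [Fintype V] (G : SimpleGraph V) : ℕ :=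
  ∑ e ∈ G.edgeFinset, edgeDeg G e ^ 2

/-- The reformulated second Zagreb index `EM₂(G) = Σ_{e ~ f} d(e)·d(f)` over unordered pairs
of distinct adjacent edges. -/
noncomputable def EM2 {V : Type*} [Fintype V] (G : SimpleGraph V) : ℕ :=
  ∑ p ∈ adjEdgePairs G,
    Sym2.lift ⟨fun e f => edgeDeg G e * edgeDeg G f, fun e f => by simp [Nat.mul_comm]⟩ p

lemma sum_deg_lift {β : Type*} [Fintype β] (H : SimpleGraph β) :
    ∑ e ∈ H.edgeFinset,
        Sym2.lift ⟨fun b b' => (H.degree b : ℤ) + H.degree b', fun b b' => by simp [add_comm]⟩ e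
      = ∑ b, (H.degree b : ℤ) ^ 2 := by
  classical
  have h1 : ∀ e ∈ H.edgeFinset,
      Sym2.lift ⟨fun b b' => (H.degree b : ℤ) + H.degree b', fun b b' => by simp [add_comm]⟩ e
        = ∑ v, if v ∈ e then (H.degree v : ℤ) else 0 := by
    intro e he
    induction e with
    | _ b b' =>
      have hadj : H.Adj b b' := by simpa using he
      have hne : b ≠ b' := hadj.ne
      have hfil : (Finset.univ.filter (· ∈ s(b, b'))) = ({b, b'} : Finset β) := by
        ext v; simp [Sym2.mem_iff]
      rw [← Finset.sum_filter, hfil, Finset.sum_pair hne, Sym2.lift_mk]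
  rw [Finset.sum_congr rfl h1, Finset.sum_comm]
  refine Finset.sum_congr rfl fun v _ => ?_
  rw [← Finset.sum_filter, Finset.sum_const, ← incidenceFinset_eq_filter,
    card_incidenceFinset_eq_degree, nsmul_eq_mul, sq]

theorem aux_main {α β : Type*} [Fintype α] [Fintype β]
    (G : SimpleGraph α) (H : SimpleGraph β) :
    (∑ a : α, ∑ e ∈ H.edgeFinset,
        Sym2.lift ⟨fun b b' => (2 * (G.degree a : ℤ) + H.degree b + H.degree b' - 2) ^ 2,
          fun b b' => by ring_nf⟩ e) =
      (Fintype.card α : ℤ) * (∑ e ∈ H.edgeFinset, edgeDeg H e ^ 2 : ℕ) + 8 * G.edgeFinset.card * (∑ b, H.degree b ^ 2) +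
        4 * H.edgeFinset.card * (∑ a, G.degree a ^ 2) -
        16 * G.edgeFinset.card * H.edgeFinset.card := by
  classical
  have key : ∀ x : ℤ, ∀ e ∈ H.edgeFinset,
      Sym2.lift ⟨fun b b' => (2 * x + H.degree b + H.degree b' - 2) ^ 2,
          fun b b' => by ring_nf⟩ e
        = (edgeDeg H e : ℤ) ^ 2
          + 4 * x * (Sym2.lift ⟨fun b b' => (H.degree b : ℤ) + H.degree b',
              fun b b' => by simp [add_comm]⟩ e) - 8 * x + 4 * x ^ 2 := by
    intro x e he
    induction e with
    | _ b b' =>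
      have hadj : H.Adj b b' := by simpa using he
      have hb : 1 ≤ H.degree b := H.degree_pos_iff_exists_adj b |>.mpr ⟨b', hadj⟩
      have hb' : 1 ≤ H.degree b' := H.degree_pos_iff_exists_adj b' |>.mpr ⟨b, hadj.symm⟩
      have hcast : ((edgeDeg H s(b, b') : ℕ) : ℤ)
          = (H.degree b : ℤ) + H.degree b' - 2 := by
        show ((H.degree b + H.degree b' - 2 : ℕ) : ℤ) = _
        have : 2 ≤ H.degree b + H.degree b' := by omega
        push_cast [Nat.cast_sub this]
        ring
      rw [Sym2.lift_mk, Sym2.lift_mk, hcast]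
      ring
  have inner : ∀ a : α, ∑ e ∈ H.edgeFinset,
      Sym2.lift ⟨fun b b' => (2 * (G.degree a : ℤ) + H.degree b + H.degree b' - 2) ^ 2,
          fun b b' => by ring_nf⟩ e
      = (∑ e ∈ H.edgeFinset, (edgeDeg H e : ℤ) ^ 2)
        + 4 * (G.degree a : ℤ) * (∑ b, (H.degree b : ℤ) ^ 2)
        - 8 * (G.degree a : ℤ) * H.edgeFinset.card
        + 4 * (G.degree a : ℤ) ^ 2 * H.edgeFinset.card := by
    intro a
    rw [Finset.sum_congr rfl (key (G.degree a))]
    rw [Finset.sum_add_distrib, Finset.sum_sub_distrib, Finset.sum_add_distrib,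
      ← Finset.mul_sum, sum_deg_lift, Finset.sum_const, Finset.sum_const]
    ring
  rw [Finset.sum_congr rfl (fun a _ => inner a)]
  have hG : (∑ a, (G.degree a : ℤ)) = 2 * G.edgeFinset.card := by
    exact_mod_cast congrArg (Nat.cast : ℕ → ℤ) G.sum_degrees_eq_twice_card_edges
  have e1 : ∑ a : α, 4 * (G.degree a : ℤ) * (∑ b, (H.degree b : ℤ) ^ 2)
      = 4 * (∑ a, (G.degree a : ℤ)) * (∑ b, (H.degree b : ℤ) ^ 2) := by
    rw [← Finset.sum_mul, ← Finset.mul_sum]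
  have e2 : ∑ a : α, 8 * (G.degree a : ℤ) * (H.edgeFinset.card : ℤ)
      = 8 * (∑ a, (G.degree a : ℤ)) * (H.edgeFinset.card : ℤ) := by
    rw [← Finset.sum_mul, ← Finset.mul_sum]
  have e3 : ∑ a : α, 4 * (G.degree a : ℤ) ^ 2 * (H.edgeFinset.card : ℤ)
      = 4 * (∑ a, (G.degree a : ℤ) ^ 2) * (H.edgeFinset.card : ℤ) := by
    rw [← Finset.sum_mul, ← Finset.mul_sum]
  rw [Finset.sum_add_distrib, Finset.sum_sub_distrib, Finset.sum_add_distrib,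
    Finset.sum_const, Finset.card_univ, e1, e2, e3, hG]
  push_cast
  ring

/-- For finite simple graphs `G`, `H`:
`Σ_{a∈V(G)} Σ_{bb'∈E(H)} (2 d_G(a) + d_H(b) + d_H(b') − 2)²
  = n_G·EM₁(H) + 8 m_G·M₁(H) + 4 m_H·M₁(G) − 16 m_G m_H`
(as integers), where `M₁(G) = Σ_v d(v)²` and `EM₁(H) = Σ_{bb'∈E(H)} (d(b)+d(b')−2)²`. -/
theorem sum_over_vertices_and_edges {α β : Type*} [Fintype α] [Fintype β]
    (G : SimpleGraph α) (H : SimpleGraph β) :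
    (∑ a : α, ∑ e ∈ H.edgeFinset,
        Sym2.lift ⟨fun b b' => (2 * (G.degree a : ℤ) + H.degree b + H.degree b' - 2) ^ 2,
          fun b b' => by ring_nf⟩ e) =
      (Fintype.card α : ℤ) * EM1 H + 8 * G.edgeFinset.card * (∑ b, H.degree b ^ 2) +
        4 * H.edgeFinset.card * (∑ a, G.degree a ^ 2) -
        16 * G.edgeFinset.card * H.edgeFinset.card := by
  simpa only [EM1] using aux_main G H
end
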